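/- For t in (0, 1/√3], the function ψ(t) = arctan t + arctan((1-t²)/(2t)) − t/(1+t²) satisfies π/3 − √3/4 ≤ ψ(t) < π/2. -/

import Mathlib

/-!
For `t > 0` the cotangent double-angle formula gives `arctan ((1 - t²) / (2t)) = π/2 - 2 arctan t`,
so `ψ t = π/2 - arctan t - t / (1 + t²)`. Both subtracted terms are positive, which gives the upper
bound; for `t ≤ 1/√3` they are at most `π/6` and `√3/4` respectively, which gives the lower bound.
-/

open Real

namespace Real

theorem arctan_one_sub_sq_div_two_mul {t : ℝ} (ht : 0 < t) :
    arctan ((1 - t ^ 2) / (2 * t)) = π / 2 - 2 * arctan t := by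
  have hpos : 0 < arctan t := arctan_pos.2 ht
  have hlt : arctan t < π / 2 := arctan_lt_pi_div_two t
  calc arctan ((1 - t ^ 2) / (2 * t))
      = arctan (tan (π / 2 - 2 * arctan t)) := by
        rw [tan_pi_div_two_sub, tan_two_mul, tan_arctan, inv_div]
    _ = π / 2 - 2 * arctan t := arctan_tan (by linarith) (by linarith)

theorem arctan_le_pi_div_six {t : ℝ} (ht : t ≤ 1 / √3) : arctan t ≤ π / 6 := by
  rw [← arctan_inv_sqrt_three, ← one_div]
  exact arctan_le_arctan_iff.2 ht

end Real

theorem div_one_add_sq_le_sqrt_three_div_four {t : ℝ} (ht : t ≤ 1 / √3) :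
    t / (1 + t ^ 2) ≤ √3 / 4 := by
  have hs : 0 < √3 := by positivity
  have hs_sq : √3 ^ 2 = 3 := sq_sqrt (by norm_num)
  have hst : √3 * t ≤ 1 := by rwa [le_div_iff₀' hs] at ht
  rw [div_le_div_iff₀ (by positivity) (by norm_num)]
  -- `√3 (1 + t²) - 4t = (1 - √3 t)(√3 - t)`, and both factors are nonnegative.
  nlinarith [mul_nonneg (sub_nonneg.2 hst) (by nlinarith : (0 : ℝ) ≤ 3 - √3 * t)]

theorem stmt_4 (t : ℝ) (h0 : 0 < t) (h1 : t ≤ 1 / Real.sqrt 3) :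
    π / 3 - Real.sqrt 3 / 4 ≤
        Real.arctan t + Real.arctan ((1 - t ^ 2) / (2 * t)) - t / (1 + t ^ 2) ∧
      Real.arctan t + Real.arctan ((1 - t ^ 2) / (2 * t)) - t / (1 + t ^ 2) < π / 2 := by
  rw [arctan_one_sub_sq_div_two_mul h0]
  have harctan_pos : 0 < arctan t := arctan_pos.2 h0
  have hfrac_pos : 0 < t / (1 + t ^ 2) := by positivity
  have harctan_le := arctan_le_pi_div_six h1
  have hfrac_le := div_one_add_sq_le_sqrt_three_div_four h1
  constructor <;> linarith
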